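/- Let s, μ, c > 0 with μ ≥ c. Define S(x) = ∫₀ˣ e^{-2sζ/c}(1-ζ)^{-2μ/c} dζ and m(x) = e^{2sx/c}(1-x)^{2μ/c-1}/(cx). Then m(x)S(x)² is NOT integrable on (0,1), while m(x)S(x) IS integrable on (0,1). -/

import Mathlib

/-!
Write `θ = 2μ/c ≥ 2`. On `[0, 1]` the factors `e^{±2sx/c}` lie between `e^{-|2s/c|}` and
`e^{|2s/c|}`, so up to constants `S(x)` is `∫₀ˣ (1-t)^{-θ} dt = ((1-x)^{1-θ} - 1)/(θ-1)` and
`m(x)` is `(1-x)^{θ-1}/x`. Bernoulli's inequality `(1-x)^{θ-1} ≥ 1 - (θ-1)x` gives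
`S(x) ≲ x(1-x)^{1-θ}`, so `m·S` is bounded on `(0,1)`. With `y = (1-x)^{1-θ} ≥ (1-x)⁻¹` one gets
`m·S² ≳ (y-1)²/y ≥ (1-x)⁻¹ - 2`, which is not integrable at `1`.
-/

open MeasureTheory Real Set

theorem integral_one_sub_rpow_neg {θ x : ℝ} (hθ : θ ≠ 1) (hx : x < 1) :
    ∫ t in (0 : ℝ)..x, (1 - t) ^ (-θ) = ((1 - x) ^ (1 - θ) - 1) / (θ - 1) := by
  have h0 : (0 : ℝ) ∉ uIcc (1 - x) (1 - 0) := fun h => by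
    rcases mem_uIcc.1 h with h | h <;> linarith [h.1]
  rw [intervalIntegral.integral_comp_sub_left (fun u => u ^ (-θ)),
    integral_rpow (.inr ⟨fun h => hθ (by linarith), h0⟩), sub_zero, one_rpow,
    show -θ + 1 = 1 - θ by ring, ← neg_sub θ, div_neg, ← neg_div, neg_sub]

theorem integral_one_sub_rpow_neg_le {θ x : ℝ} (hθ : 2 ≤ θ) (hx1 : x < 1) :
    ∫ t in (0 : ℝ)..x, (1 - t) ^ (-θ) ≤ x * (1 - x) ^ (1 - θ) := by
  have h1x : 0 < 1 - x := by linarith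
  have hy : 0 < (1 - x) ^ (1 - θ) := rpow_pos_of_pos h1x _
  have hcancel : (1 - x) ^ (θ - 1) * (1 - x) ^ (1 - θ) = 1 := by
    rw [← rpow_add h1x, show θ - 1 + (1 - θ) = 0 by ring, rpow_zero]
  have bernoulli : 1 + (θ - 1) * -x ≤ (1 - x) ^ (θ - 1) := by
    simpa [sub_eq_add_neg] using one_add_mul_self_le_rpow_one_add (by linarith : -1 ≤ -x)
      (by linarith : 1 ≤ θ - 1)
  rw [integral_one_sub_rpow_neg (by linarith) hx1, div_le_iff₀ (by linarith)]
  nlinarith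

theorem not_integrableOn_Ioo_of_inv_sub_le {f : ℝ → ℝ} {a b K L : ℝ} (hab : a < b) (hK : 0 < K)
    (hf : ∀ x ∈ Ioo a b, K * (b - x)⁻¹ - L ≤ f x) : ¬ IntegrableOn f (Ioo a b) := by
  intro hint
  have hdom : IntegrableOn (fun x => (f x + L) / K) (Ioo a b) :=
    (hint.add (integrableOn_const measure_Ioo_lt_top.ne)).div_const K
  have hinv : IntegrableOn (fun x => (x - b)⁻¹) (Ioo a b) := by
    refine hdom.mono' (by fun_prop) (ae_restrict_of_forall_mem measurableSet_Ioo fun x hx => ?_)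
    have hbx : 0 < b - x := sub_pos.2 hx.2
    rw [norm_inv, Real.norm_eq_abs, abs_sub_comm, abs_of_pos hbx, le_div_iff₀ hK]
    linarith [hf x hx]
  have := (intervalIntegrable_iff_integrableOn_Ioo_of_le hab.le).2 hinv
  rw [intervalIntegrable_sub_inv_iff, uIcc_of_le hab.le] at this
  exact this.elim hab.ne (fun h => h (right_mem_Icc.2 hab.le))

theorem continuousOn_primitive_Iio {f : ℝ → ℝ} {a b : ℝ} (ha : a < b)
    (hf : ContinuousOn f (Iio b)) : ContinuousOn (fun x => ∫ t in a..x, f t) (Iio b) := by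
  intro x hx
  have hsub : uIcc a x ⊆ Iio b := fun t ht => lt_of_le_of_lt ht.2 (max_lt ha hx)
  exact (intervalIntegral.integral_hasDerivAt_right ((hf.mono hsub).intervalIntegrable)
    (hf.stronglyMeasurableAtFilter isOpen_Iio x hx)
    (hf.continuousAt (Iio_mem_nhds hx))).continuousAt.continuousWithinAt

theorem exp_neg_abs_le_exp_mul (r : ℝ) {t : ℝ} (ht : |t| ≤ 1) : exp (-|r|) ≤ exp (r * t) := by
  have : |r * t| ≤ |r| := by rw [abs_mul]; exact mul_le_of_le_one_right (abs_nonneg r) ht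
  exact exp_le_exp.2 (by linarith [neg_abs_le (r * t)])

theorem exp_mul_le_exp_abs (r : ℝ) {t : ℝ} (ht : |t| ≤ 1) : exp (r * t) ≤ exp |r| := by
  have : |r * t| ≤ |r| := by rw [abs_mul]; exact mul_le_of_le_one_right (abs_nonneg r) ht
  exact exp_le_exp.2 (le_trans (le_abs_self _) this)

noncomputable def scaleDensity (s μ c t : ℝ) : ℝ :=
  exp (-2 * s * t / c) * (1 - t) ^ (-(2 * μ / c))

noncomputable def scaleFunction (s μ c x : ℝ) : ℝ :=
  ∫ t in (0 : ℝ)..x, scaleDensity s μ c t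

noncomputable def speedDensity (s μ c x : ℝ) : ℝ :=
  exp (2 * s * x / c) * (1 - x) ^ (2 * μ / c - 1) / (c * x)

theorem continuousOn_one_sub_rpow (p : ℝ) : ContinuousOn (fun t : ℝ => (1 - t) ^ p) (Iio 1) :=
  (continuousOn_const.sub continuousOn_id).rpow_const fun _ ht => .inl (sub_ne_zero.2 (ne_of_gt ht))

section WrightFisher

variable {s μ c x : ℝ}

theorem continuousOn_scaleDensity : ContinuousOn (scaleDensity s μ c) (Iio 1) :=
  (by fun_prop : Continuous fun t => exp (-2 * s * t / c)).continuousOn.mul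
    (continuousOn_one_sub_rpow _)

theorem continuousOn_speedDensity (hc : c ≠ 0) : ContinuousOn (speedDensity s μ c) (Ioo 0 1) :=
  ((by fun_prop : Continuous fun x => exp (2 * s * x / c)).continuousOn.mul
    ((continuousOn_one_sub_rpow _).mono Ioo_subset_Iio_self)).div (by fun_prop)
    fun x hx => mul_ne_zero hc hx.1.ne'

theorem scaleDensity_nonneg {t : ℝ} (ht : t ≤ 1) : 0 ≤ scaleDensity s μ c t :=
  mul_nonneg (exp_nonneg _) (rpow_nonneg (sub_nonneg.2 ht) _)

theorem scaleDensity_mem_Icc {t : ℝ} (ht : t ∈ Icc 0 1) :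
    exp (-|2 * s / c|) * (1 - t) ^ (-(2 * μ / c)) ≤ scaleDensity s μ c t ∧
      scaleDensity s μ c t ≤ exp |2 * s / c| * (1 - t) ^ (-(2 * μ / c)) := by
  have ht' : |t| ≤ 1 := abs_le.2 ⟨by linarith [ht.1], ht.2⟩
  have hr : |-2 * s / c| = |2 * s / c| := by rw [neg_mul, neg_div, abs_neg]
  have hp : 0 ≤ (1 - t) ^ (-(2 * μ / c)) := rpow_nonneg (sub_nonneg.2 ht.2) _
  rw [scaleDensity, ← div_mul_eq_mul_div (-2 * s) c t, ← hr]
  exact ⟨mul_le_mul_of_nonneg_right (exp_neg_abs_le_exp_mul _ ht') hp,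
    mul_le_mul_of_nonneg_right (exp_mul_le_exp_abs _ ht') hp⟩

theorem scaleFunction_mem_Icc (hx0 : 0 ≤ x) (hx1 : x < 1) :
    exp (-|2 * s / c|) * ∫ t in (0 : ℝ)..x, (1 - t) ^ (-(2 * μ / c)) ≤ scaleFunction s μ c x ∧
      scaleFunction s μ c x ≤ exp |2 * s / c| * ∫ t in (0 : ℝ)..x, (1 - t) ^ (-(2 * μ / c)) := by
  have hsub : uIcc 0 x ⊆ Iio 1 := by rw [uIcc_of_le hx0]; exact fun t ht => ht.2.trans_lt hx1
  have hS : IntervalIntegrable (scaleDensity s μ c) volume 0 x :=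
    (continuousOn_scaleDensity.mono hsub).intervalIntegrable
  have hJ : IntervalIntegrable (fun t : ℝ => (1 - t) ^ (-(2 * μ / c))) volume 0 x :=
    ((continuousOn_one_sub_rpow _).mono hsub).intervalIntegrable
  have hIcc : ∀ t ∈ Icc 0 x, t ∈ Icc (0 : ℝ) 1 := fun t ht => ⟨ht.1, ht.2.trans hx1.le⟩
  rw [← intervalIntegral.integral_const_mul, ← intervalIntegral.integral_const_mul]
  exact ⟨intervalIntegral.integral_mono_on hx0 (hJ.const_mul _) hS
      fun t ht => (scaleDensity_mem_Icc (hIcc t ht)).1,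
    intervalIntegral.integral_mono_on hx0 hS (hJ.const_mul _)
      fun t ht => (scaleDensity_mem_Icc (hIcc t ht)).2⟩

theorem scaleFunction_nonneg (hx0 : 0 ≤ x) (hx1 : x ≤ 1) : 0 ≤ scaleFunction s μ c x :=
  intervalIntegral.integral_nonneg hx0 fun _ ht => scaleDensity_nonneg (ht.2.trans hx1)

theorem speedDensity_nonneg (hc : 0 ≤ c) (hx0 : 0 ≤ x) (hx1 : x ≤ 1) :
    0 ≤ speedDensity s μ c x :=
  div_nonneg (mul_nonneg (exp_nonneg _) (rpow_nonneg (sub_nonneg.2 hx1) _)) (mul_nonneg hc hx0)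

theorem continuousOn_scaleFunction : ContinuousOn (scaleFunction s μ c) (Iio 1) :=
  continuousOn_primitive_Iio zero_lt_one continuousOn_scaleDensity

theorem two_le_two_mul_div (hc : 0 < c) (hμc : c ≤ μ) : 2 ≤ 2 * μ / c := by
  rw [le_div_iff₀ hc]; linarith

theorem speedDensity_mem_Icc (hc : 0 < c) (hx : x ∈ Ioo 0 1) :
    exp (-|2 * s / c|) * (1 - x) ^ (2 * μ / c - 1) / c ≤ speedDensity s μ c x ∧
      speedDensity s μ c x ≤ exp |2 * s / c| * (1 - x) ^ (2 * μ / c - 1) / (c * x) := by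
  have hx' : |x| ≤ 1 := abs_le.2 ⟨by linarith [hx.1], hx.2.le⟩
  have hp : 0 ≤ (1 - x) ^ (2 * μ / c - 1) := rpow_nonneg (sub_nonneg.2 hx.2.le) _
  have hcx : 0 < c * x := mul_pos hc hx.1
  rw [speedDensity, ← div_mul_eq_mul_div (2 * s) c x]
  constructor
  · calc exp (-|2 * s / c|) * (1 - x) ^ (2 * μ / c - 1) / c
        ≤ exp (-|2 * s / c|) * (1 - x) ^ (2 * μ / c - 1) / (c * x) :=
          div_le_div_of_nonneg_left (by positivity) hcx (mul_le_of_le_one_right hc.le hx.2.le)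
      _ ≤ _ := div_le_div_of_nonneg_right
          (mul_le_mul_of_nonneg_right (exp_neg_abs_le_exp_mul _ hx') hp) hcx.le
  · exact div_le_div_of_nonneg_right
      (mul_le_mul_of_nonneg_right (exp_mul_le_exp_abs _ hx') hp) hcx.le

theorem speedDensity_mul_scaleFunction_le (hc : 0 < c) (hμc : c ≤ μ) (hx : x ∈ Ioo 0 1) :
    speedDensity s μ c x * scaleFunction s μ c x ≤ exp |2 * s / c| ^ 2 / c := by
  have hS_upper := (scaleFunction_mem_Icc (s := s) (μ := μ) (c := c) hx.1.le hx.2).2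
  have hm_upper := (speedDensity_mem_Icc (s := s) (μ := μ) hc hx).2
  have hθ := two_le_two_mul_div hc hμc
  set θ := 2 * μ / c
  set E := exp |2 * s / c|
  have h1x : 0 < 1 - x := by linarith [hx.2]
  have hcancel : (1 - x) ^ (θ - 1) * (1 - x) ^ (1 - θ) = 1 := by
    rw [← rpow_add h1x, show θ - 1 + (1 - θ) = 0 by ring, rpow_zero]
  have hS : scaleFunction s μ c x ≤ E * (x * (1 - x) ^ (1 - θ)) :=
    hS_upper.trans (mul_le_mul_of_nonneg_left (integral_one_sub_rpow_neg_le hθ hx.2) (exp_nonneg _))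
  calc speedDensity s μ c x * scaleFunction s μ c x
      ≤ E * (1 - x) ^ (θ - 1) / (c * x) * (E * (x * (1 - x) ^ (1 - θ))) :=
        mul_le_mul hm_upper hS (scaleFunction_nonneg hx.1.le hx.2.le)
          ((speedDensity_nonneg hc.le hx.1.le hx.2.le).trans hm_upper)
    _ = E ^ 2 / c * ((1 - x) ^ (θ - 1) * (1 - x) ^ (1 - θ)) := by
        field_simp [hx.1.ne']
    _ = E ^ 2 / c := by rw [hcancel, mul_one]

theorem inv_one_sub_le_speedDensity_mul_scaleFunction_sq (hc : 0 < c) (hμc : c ≤ μ)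
    (hx : x ∈ Ioo 0 1) :
    exp (-|2 * s / c|) ^ 3 / (c * (2 * μ / c - 1) ^ 2) * ((1 - x)⁻¹ - 2) ≤
      speedDensity s μ c x * scaleFunction s μ c x ^ 2 := by
  have hS := (scaleFunction_mem_Icc (s := s) (μ := μ) (c := c) hx.1.le hx.2).1
  have hm := (speedDensity_mem_Icc (s := s) (μ := μ) hc hx).1
  have hθ := two_le_two_mul_div hc hμc
  set θ := 2 * μ / c
  set E := exp (-|2 * s / c|)
  have h1x : 0 < 1 - x := by linarith [hx.2]
  rw [integral_one_sub_rpow_neg (by linarith) hx.2] at hS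
  rw [← neg_sub 1 θ, rpow_neg h1x.le] at hm
  set y := (1 - x) ^ (1 - θ)
  have hy : 0 < y := rpow_pos_of_pos h1x _
  have hyx : (1 - x)⁻¹ ≤ y := by
    rw [← rpow_neg_one]
    exact rpow_le_rpow_of_exponent_ge h1x (by linarith [hx.1]) (by linarith)
  have hy1 : 1 ≤ y := le_trans (one_le_inv_iff₀.2 ⟨h1x, by linarith [hx.1]⟩) hyx
  have hθ1 : 0 < θ - 1 := by linarith
  calc E ^ 3 / (c * (θ - 1) ^ 2) * ((1 - x)⁻¹ - 2)
      ≤ E ^ 3 / (c * (θ - 1) ^ 2) * ((y - 1) ^ 2 / y) := by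
        gcongr
        rw [le_div_iff₀ hy]
        nlinarith
    _ = E * y⁻¹ / c * (E * ((y - 1) / (θ - 1))) ^ 2 := by field_simp
    _ ≤ speedDensity s μ c x * scaleFunction s μ c x ^ 2 :=
        mul_le_mul hm (pow_le_pow_left₀ (by positivity) hS 2) (sq_nonneg _)
          (speedDensity_nonneg hc.le hx.1.le hx.2.le)

theorem integrableOn_speedDensity_mul_scaleFunction (hc : 0 < c) (hμc : c ≤ μ) :
    IntegrableOn (fun x => speedDensity s μ c x * scaleFunction s μ c x) (Ioo 0 1) := by
  refine IntegrableOn.of_bound measure_Ioo_lt_top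
    (((continuousOn_speedDensity hc.ne').mul (continuousOn_scaleFunction.mono
      Ioo_subset_Iio_self)).aestronglyMeasurable measurableSet_Ioo) (exp |2 * s / c| ^ 2 / c)
    (ae_restrict_of_forall_mem measurableSet_Ioo fun x hx => ?_)
  rw [Real.norm_of_nonneg (mul_nonneg (speedDensity_nonneg hc.le hx.1.le hx.2.le)
    (scaleFunction_nonneg hx.1.le hx.2.le))]
  exact speedDensity_mul_scaleFunction_le hc hμc hx

theorem not_integrableOn_speedDensity_mul_scaleFunction_sq (hc : 0 < c) (hμc : c ≤ μ) :
    ¬ IntegrableOn (fun x => speedDensity s μ c x * scaleFunction s μ c x ^ 2) (Ioo 0 1) := by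
  have hθ1 : 2 * μ / c - 1 ≠ 0 := by linarith [two_le_two_mul_div hc hμc]
  set K := exp (-|2 * s / c|) ^ 3 / (c * (2 * μ / c - 1) ^ 2)
  refine not_integrableOn_Ioo_of_inv_sub_le (K := K) (L := 2 * K) zero_lt_one (by positivity)
    fun x hx => ?_
  linarith [inv_one_sub_le_speedDensity_mul_scaleFunction_sq (s := s) hc hμc hx]

end WrightFisher

theorem speed_scale_integrability_general (s μ c : ℝ)
    (hc : 0 < c) (h : c ≤ μ) :
    (¬ IntegrableOn
      (fun x : ℝ =>
        Real.exp (2 * s * x / c) * (1 - x) ^ (2 * μ / c - 1) / (c * x) *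
          (∫ t in (0 : ℝ)..x, Real.exp (-2 * s * t / c) * (1 - t) ^ (-(2 * μ / c))) ^ 2)
      (Set.Ioo (0 : ℝ) 1)) ∧
    IntegrableOn
      (fun x : ℝ =>
        Real.exp (2 * s * x / c) * (1 - x) ^ (2 * μ / c - 1) / (c * x) *
          (∫ t in (0 : ℝ)..x, Real.exp (-2 * s * t / c) * (1 - t) ^ (-(2 * μ / c))))
      (Set.Ioo (0 : ℝ) 1) :=
  ⟨not_integrableOn_speedDensity_mul_scaleFunction_sq hc h,
    integrableOn_speedDensity_mul_scaleFunction hc h⟩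

/-- If `μ ≥ c`, then `m·S²` is not integrable on `(0,1)`, while `m·S` is
integrable on `(0,1)`, where `S` is the scale function and `m` the speed
density of the Wright–Fisher diffusion. -/
theorem speed_scale_integrability (s μ c : ℝ) (hs : 0 < s) (hμ : 0 < μ)
    (hc : 0 < c) (h : c ≤ μ) :
    (¬ IntegrableOn
      (fun x : ℝ =>
        Real.exp (2 * s * x / c) * (1 - x) ^ (2 * μ / c - 1) / (c * x) *
          (∫ t in (0 : ℝ)..x, Real.exp (-2 * s * t / c) * (1 - t) ^ (-(2 * μ / c))) ^ 2)
      (Set.Ioo (0 : ℝ) 1)) ∧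
    IntegrableOn
      (fun x : ℝ =>
        Real.exp (2 * s * x / c) * (1 - x) ^ (2 * μ / c - 1) / (c * x) *
          (∫ t in (0 : ℝ)..x, Real.exp (-2 * s * t / c) * (1 - t) ^ (-(2 * μ / c))))
      (Set.Ioo (0 : ℝ) 1) :=
  speed_scale_integrability_general s μ c hc h
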